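/- arXiv:2305.03559 — 3 statements merged into one kernel-verified Lean document; each statement's English description precedes it below -/
import Mathlib

section
/- Let (σ_k) be a sequence of positive reals with σ_{k+1} ∈ [¾σ_k, σ_k] for all k, and let (α_k) be positive reals satisfying α_{k+1} ≤ √(σ_k/σ_{k-1} · (1 + ρ_k)) · (σ_k/σ_{k+1}) · α_k, where ρ_k = σ_k α_k / (σ_{k-1} α_{k-1}). Then ρ_{k+1} ≤ √(1 + ρ_k) for all k, and consequently sup_k ρ_k ≤ (1 + √5)/2 provided ρ_0 ≤ (1+√5)/2. -/
/-!
Dividing the stepsize bound by `σ k α k` gives `ρ (k + 1) ≤ √(σ k / σ (k - 1) · (1 + ρ k))`, and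
`σ k ≤ σ (k - 1)` removes the ratio under the root. The golden ratio is the fixed point of
`x ↦ √(1 + x)` (as `φ² = φ + 1`), so by monotonicity of this map the bound `ρ k ≤ φ` propagates.
-/

open scoped goldenRatio

namespace Real

theorem sqrt_one_add_goldenRatio : √(1 + φ) = φ := by
  rw [add_comm, ← goldenRatio_sq, sqrt_sq goldenRatio_pos.le]

theorem le_goldenRatio_of_le_sqrt_one_add {x : ℕ → ℝ} (hx : ∀ k, x (k + 1) ≤ √(1 + x k))
    (h0 : x 0 ≤ φ) (k : ℕ) : x k ≤ φ := by
  induction k with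
  | zero => exact h0
  | succ k ih =>
    calc x (k + 1) ≤ √(1 + x k) := hx k
      _ ≤ √(1 + φ) := sqrt_le_sqrt (by linarith)
      _ = φ := sqrt_one_add_goldenRatio

end Real

theorem mul_div_mul_le_of_le_mul_div_mul {s₁ s₂ a₁ a₂ c : ℝ} (hs₂ : 0 < s₂) (hsa₁ : 0 < s₁ * a₁)
    (h : a₂ ≤ c * (s₁ / s₂) * a₁) : s₂ * a₂ / (s₁ * a₁) ≤ c := by
  rw [div_le_iff₀ hsa₁]
  calc s₂ * a₂ ≤ s₂ * (c * (s₁ / s₂) * a₁) := mul_le_mul_of_nonneg_left h hs₂.le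
    _ = c * (s₁ * a₁) := by field_simp

theorem sqrt_mul_le_sqrt_of_le_one {t x : ℝ} (ht : t ≤ 1) (hx : 0 ≤ x) : √(t * x) ≤ √x :=
  Real.sqrt_le_sqrt (mul_le_of_le_one_left hx ht)

theorem stmt3 (σ α : ℕ → ℝ)
    (hσpos : ∀ k, 0 < σ k)
    (hσ : ∀ k, σ (k + 1) ∈ Set.Icc ((3 / 4) * σ k) (σ k))
    (hαpos : ∀ k, 0 < α k)
    (ρ : ℕ → ℝ)
    (hρ : ∀ k, ρ k = σ k * α k / (σ (k - 1) * α (k - 1)))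
    (hα : ∀ k, α (k + 1) ≤
      Real.sqrt (σ k / σ (k - 1) * (1 + ρ k)) * (σ k / σ (k + 1)) * α k) :
    (∀ k, ρ (k + 1) ≤ Real.sqrt (1 + ρ k)) ∧
    (ρ 0 ≤ (1 + Real.sqrt 5) / 2 → ∀ k, ρ k ≤ (1 + Real.sqrt 5) / 2) := by
  have hρpos (k : ℕ) : 0 < ρ k := by
    rw [hρ k]
    exact div_pos (mul_pos (hσpos k) (hαpos k)) (mul_pos (hσpos _) (hαpos _))
  have hσ_antitone (k : ℕ) : σ k ≤ σ (k - 1) := by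
    cases k with
    | zero => rfl
    | succ k => exact (hσ k).2
  have hstep (k : ℕ) : ρ (k + 1) ≤ Real.sqrt (1 + ρ k) := by
    calc ρ (k + 1) ≤ Real.sqrt (σ k / σ (k - 1) * (1 + ρ k)) := by
          rw [hρ (k + 1), Nat.add_sub_cancel]
          exact mul_div_mul_le_of_le_mul_div_mul (hσpos _) (mul_pos (hσpos k) (hαpos k)) (hα k)
      _ ≤ Real.sqrt (1 + ρ k) :=
          sqrt_mul_le_sqrt_of_le_one (div_le_one_of_le₀ (hσ_antitone k) (hσpos _).le)
            (by linarith [hρpos k])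
  exact ⟨hstep, Real.le_goldenRatio_of_le_sqrt_one_add hstep⟩
end

section
/- With σ_{k+1} ∈ [¾σ_k, σ_k] and α_{k+1} = ν/(σ_{k+1}L₁ + L₂) (ν ∈ (0,1), L₁, L₂ > 0), for every k one has α_{k+1} ≤ √(σ_k/σ_{k-1} · (1 + ρ_k)) · (σ_k/σ_{k+1}) · α_k, where ρ_k = σ_kα_k/(σ_{k-1}α_{k-1}). -/
/-!
The static stepsize `α(s) = ν / (s L₁ + L₂)` is antitone in `s` while `s α(s)` is monotone.
Monotonicity of `s α(s)` gives `α_{k+1} ≤ (σ_k / σ_{k+1}) α_k`; antitonicity gives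
`ρ_k ≥ σ_k / σ_{k-1} ≥ 3/4`, so the square root is at least `√(3/4 · 7/4) ≥ 1`.
-/

section StaticStep

variable {ν L₁ L₂ : ℝ}

lemma div_mul_add_le_div_mul_add (hν : 0 ≤ ν) (hL₁ : 0 ≤ L₁) (hL₂ : 0 < L₂) {a b : ℝ}
    (hb : 0 ≤ b) (hba : b ≤ a) : ν / (a * L₁ + L₂) ≤ ν / (b * L₁ + L₂) :=
  div_le_div_of_nonneg_left hν (by positivity) (by gcongr)

lemma mul_div_mul_add_le_mul_div_mul_add (hν : 0 ≤ ν) (hL₁ : 0 ≤ L₁) (hL₂ : 0 < L₂) {b c : ℝ}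
    (hc : 0 ≤ c) (hcb : c ≤ b) : c * (ν / (c * L₁ + L₂)) ≤ b * (ν / (b * L₁ + L₂)) := by
  have hb : 0 ≤ b := hc.trans hcb
  rw [mul_div_assoc', mul_div_assoc', div_le_div_iff₀ (by positivity) (by positivity)]
  nlinarith [mul_nonneg (mul_nonneg hν hL₂.le) (sub_nonneg.mpr hcb)]

end StaticStep

lemma one_le_mul_one_add {r ρ : ℝ} (hr : 3 / 4 ≤ r) (hrρ : r ≤ ρ) : 1 ≤ r * (1 + ρ) := by
  nlinarith

lemma Icc_pred_of_forall_Icc_succ {σ : ℕ → ℝ} (hσpos : ∀ k, 0 < σ k)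
    (hσ : ∀ k, σ (k + 1) ∈ Set.Icc ((3 / 4) * σ k) (σ k)) (k : ℕ) :
    σ k ∈ Set.Icc ((3 / 4) * σ (k - 1)) (σ (k - 1)) := by
  rcases k with _ | k
  · exact ⟨by linarith [hσpos 0], le_rfl⟩
  · exact hσ k

theorem stmt11 (σ : ℕ → ℝ) (hσpos : ∀ k, 0 < σ k)
    (hσ : ∀ k, σ (k + 1) ∈ Set.Icc ((3 / 4) * σ k) (σ k))
    (ν L₁ L₂ : ℝ) (hν : ν ∈ Set.Ioo (0 : ℝ) 1) (hL₁ : 0 < L₁) (hL₂ : 0 < L₂)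
    (α : ℕ → ℝ) (hα : ∀ k, α k = ν / (σ k * L₁ + L₂))
    (ρ : ℕ → ℝ)
    (hρ : ∀ k, ρ k = σ k * α k / (σ (k - 1) * α (k - 1))) :
    ∀ k, α (k + 1) ≤
      Real.sqrt (σ k / σ (k - 1) * (1 + ρ k)) * (σ k / σ (k + 1)) * α k := by
  intro k
  have hν0 : 0 ≤ ν := hν.1.le
  obtain ⟨hcb₁, hcb⟩ := hσ k
  obtain ⟨hba₁, hba⟩ := Icc_pred_of_forall_Icc_succ hσpos hσ k
  have hαpos : ∀ j, 0 < α j := fun j ↦ by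
    rw [hα j]; have := hσpos j; exact div_pos hν.1 (by positivity)
  have hdecay : α (k + 1) ≤ σ k / σ (k + 1) * α k := by
    rw [div_mul_eq_mul_div, le_div_iff₀ (hσpos _), mul_comm, hα, hα]
    exact mul_div_mul_add_le_mul_div_mul_add hν0 hL₁.le hL₂ (hσpos _).le hcb
  have hratio : σ k / σ (k - 1) ≤ ρ k := by
    rw [hρ, mul_div_mul_comm]
    refine le_mul_of_one_le_right (by have := hσpos k; have := hσpos (k - 1); positivity) ?_
    rw [one_le_div (hαpos _), hα, hα]
    exact div_mul_add_le_div_mul_add hν0 hL₁.le hL₂ (hσpos k).le hba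
  have hsqrt : 1 ≤ Real.sqrt (σ k / σ (k - 1) * (1 + ρ k)) :=
    Real.one_le_sqrt.mpr <| one_le_mul_one_add
      ((le_div_iff₀ (hσpos _)).mpr hba₁) hratio
  calc α (k + 1) ≤ σ k / σ (k + 1) * α k := hdecay
    _ ≤ Real.sqrt (σ k / σ (k - 1) * (1 + ρ k)) * (σ k / σ (k + 1) * α k) :=
        le_mul_of_one_le_left (hdecay.trans' (hαpos _).le) hsqrt
    _ = _ := by ring
end

section
/- Let f : ℝⁿ → ℝ be convex and continuously differentiable, g : ℝⁿ → ℝ ∪ {∞} proper lsc convex, α > 0, and suppose x⁺ = prox_{αg}(x - α∇f(x)) with ℓ := ⟨∇f(x) - ∇f(x⁺), x - x⁺⟩/‖x - x⁺‖² satisfying αℓ ≤ ν for some ν ∈ (0,1) (when x ≠ x⁺). Then (f+g)(x⁺) ≤ (f+g)(x) - ((1-ν)/α)‖x⁺ - x‖². -/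
open scoped RealInnerProductSpace

/-- `p` is the proximal point `prox_{αg}(u)`. -/
def IsProx {E : Type*} [NormedAddCommGroup E] [InnerProductSpace ℝ E]
    (α : ℝ) (g : E → ℝ) (u p : E) : Prop :=
  ∀ w, g p + (1 / (2 * α)) * ‖p - u‖ ^ 2 ≤ g w + (1 / (2 * α)) * ‖w - u‖ ^ 2

/-!
The prox condition yields the subgradient inequality
`g x⁺ + ⟪x - α ∇f x - x⁺, w - x⁺⟫ / α ≤ g w`: compare `x⁺` with points of the segment from
`x⁺` to `w`, use convexity of `g`, and let the step shrink to `0`. Adding the gradient inequality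
of `f` at `x⁺` leaves the curvature term `⟪∇f x - ∇f x⁺, x - x⁺⟫`, which the line-search
condition bounds by `ν ‖x - x⁺‖² / α`.
-/

open Set Filter Topology

variable {E : Type*} [NormedAddCommGroup E] [InnerProductSpace ℝ E]

lemma ConvexOn.add_inner_le_of_hasGradientAt [CompleteSpace E] {f : E → ℝ} {f' x : E}
    (hf : ConvexOn ℝ univ f) (hx : HasGradientAt f f' x) (y : E) :
    f x + ⟪f', y - x⟫ ≤ f y := by
  have hline : HasDerivAt (f ∘ AffineMap.lineMap x y) ⟪f', y - x⟫ (0 : ℝ) := by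
    simpa using hx.hasFDerivAt.comp_hasDerivAt_of_eq (0 : ℝ) AffineMap.hasDerivAt_lineMap
      (AffineMap.lineMap_apply_zero x y).symm
  have hslope := (hf.comp_affineMap (AffineMap.lineMap x y)).le_slope_of_hasDerivAt
    (mem_univ 0) (mem_univ 1) zero_lt_one hline
  simp only [slope_def_field, Function.comp_apply, AffineMap.lineMap_apply_one,
    AffineMap.lineMap_apply_zero, sub_zero, div_one] at hslope
  linarith

lemma le_of_forall_le_add_mul {a b c : ℝ} (h : ∀ t ∈ Ioo (0 : ℝ) 1, a ≤ b + t * c) : a ≤ b := by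
  have hlim : Tendsto (fun t : ℝ => b + t * c) (𝓝[>] 0) (𝓝 b) := by
    have : Continuous (fun t : ℝ => b + t * c) := by fun_prop
    simpa using (this.tendsto 0).mono_left nhdsWithin_le_nhds
  exact ge_of_tendsto hlim (eventually_of_mem (Ioo_mem_nhdsGT one_pos) h)

lemma IsProx.add_inner_div_le {α : ℝ} {g : E → ℝ} {u p : E} (hg : ConvexOn ℝ univ g)
    (hα : 0 < α) (hp : IsProx α g u p) (w : E) :
    g p + ⟪u - p, w - p⟫ / α ≤ g w := by
  refine le_of_forall_le_add_mul (c := ‖w - p‖ ^ 2 / (2 * α)) fun t ht => ?_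
  have hprox := hp (AffineMap.lineMap p w t)
  have hconv : g (AffineMap.lineMap p w t) ≤ (1 - t) * g p + t * g w := by
    simpa [AffineMap.lineMap_apply_module] using
      hg.2 (mem_univ p) (mem_univ w) (by linarith [ht.2]) ht.1.le (by ring)
  have hnorm : ‖AffineMap.lineMap p w t - u‖ ^ 2
      = ‖p - u‖ ^ 2 - 2 * t * ⟪u - p, w - p⟫ + t ^ 2 * ‖w - p‖ ^ 2 := by
    rw [AffineMap.lineMap_apply, vsub_eq_sub, vadd_eq_add,
      show t • (w - p) + p - u = (p - u) + t • (w - p) by abel, norm_add_sq_real,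
      real_inner_smul_right, norm_smul, Real.norm_eq_abs, mul_pow, sq_abs, ← neg_sub u p,
      inner_neg_left]
    ring
  rw [hnorm] at hprox
  have hscaled : t * g p ≤ t * (g w - ⟪u - p, w - p⟫ / α + t * (‖w - p‖ ^ 2 / (2 * α))) :=
    calc t * g p
        ≤ t * g w + 1 / (2 * α) * (-2 * t * ⟪u - p, w - p⟫ + t ^ 2 * ‖w - p‖ ^ 2) := by linarith
      _ = _ := by field_simp; ring
  linarith [le_of_mul_le_mul_left hscaled ht.1]

lemma IsProx.descent [CompleteSpace E] {f g : E → ℝ} {f' : E → E} {α : ℝ} {x xp : E}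
    (hf : ConvexOn ℝ univ f) (hfxp : HasGradientAt f (f' xp) xp) (hg : ConvexOn ℝ univ g)
    (hα : 0 < α) (hprox : IsProx α g (x - α • f' x) xp) :
    f xp + g xp ≤ f x + g x - ‖xp - x‖ ^ 2 / α + ⟪f' x - f' xp, x - xp⟫ := by
  have hfx := hf.add_inner_le_of_hasGradientAt hfxp x
  have hgx := hprox.add_inner_div_le hg hα x
  have hstep : ⟪x - α • f' x - xp, x - xp⟫ / α = ‖xp - x‖ ^ 2 / α - ⟪f' x, x - xp⟫ := by
    rw [sub_right_comm, inner_sub_left, real_inner_smul_left, real_inner_self_eq_norm_sq,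
      norm_sub_rev]
    field_simp
  rw [inner_sub_left]
  linarith

theorem stmt12_general {n : ℕ} (f : EuclideanSpace ℝ (Fin n) → ℝ)
    (f' : EuclideanSpace ℝ (Fin n) → EuclideanSpace ℝ (Fin n))
    (hconv : ConvexOn ℝ Set.univ f)
    (hdiff : ∀ z, HasGradientAt f (f' z) z)
    (g : EuclideanSpace ℝ (Fin n) → ℝ)
    (hg : ConvexOn ℝ Set.univ g)
    (α ν : ℝ) (hα : 0 < α)
    (x xp : EuclideanSpace ℝ (Fin n))
    (hprox : IsProx α g (x - α • f' x) xp)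
    (hLS : x ≠ xp →
      α * (⟪f' x - f' xp, x - xp⟫ / ‖x - xp‖ ^ 2) ≤ ν) :
    f xp + g xp ≤ f x + g x - ((1 - ν) / α) * ‖xp - x‖ ^ 2 := by
  rcases eq_or_ne x xp with rfl | hne
  · simp
  have hdescent := hprox.descent hconv (hdiff xp) hg hα
  have hsq_pos : 0 < ‖xp - x‖ ^ 2 := by
    have := norm_pos_iff.2 (sub_ne_zero.2 hne.symm)
    positivity
  have hcurv : ⟪f' x - f' xp, x - xp⟫ ≤ ν * ‖xp - x‖ ^ 2 / α := by
    have hls := hLS hne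
    rw [norm_sub_rev, ← mul_div_assoc, div_le_iff₀ hsq_pos] at hls
    rwa [le_div_iff₀ hα, mul_comm]
  calc f xp + g xp ≤ f x + g x - ‖xp - x‖ ^ 2 / α + ν * ‖xp - x‖ ^ 2 / α := by linarith
    _ = f x + g x - ((1 - ν) / α) * ‖xp - x‖ ^ 2 := by ring

theorem stmt12 {n : ℕ} (f : EuclideanSpace ℝ (Fin n) → ℝ)
    (f' : EuclideanSpace ℝ (Fin n) → EuclideanSpace ℝ (Fin n))
    (hconv : ConvexOn ℝ Set.univ f)
    (hdiff : ∀ z, HasGradientAt f (f' z) z)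
    (g : EuclideanSpace ℝ (Fin n) → ℝ)
    (hg : ConvexOn ℝ Set.univ g) (hglsc : LowerSemicontinuous g)
    (α ν : ℝ) (hα : 0 < α) (hν : ν ∈ Set.Ioo (0 : ℝ) 1)
    (x xp : EuclideanSpace ℝ (Fin n))
    (hprox : IsProx α g (x - α • f' x) xp)
    (hLS : x ≠ xp →
      α * (⟪f' x - f' xp, x - xp⟫ / ‖x - xp‖ ^ 2) ≤ ν) :
    f xp + g xp ≤ f x + g x - ((1 - ν) / α) * ‖xp - x‖ ^ 2 :=
  stmt12_general f f' hconv hdiff g hg α ν hα x xp hprox hLS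
end
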